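/- Let n ≥ 1, let g : ℝⁿ → ℝ be twice continuously differentiable, let φ₁,…,φₙ : ℝ² → ℝ be twice continuously differentiable and ℤ²-periodic, let σ : ℝ² → ℝ² be continuously differentiable, ℤ²-periodic and divergence free (∂₁σ¹ + ∂₂σ² ≡ 0), and let ω : ℝ² → ℝ be continuously differentiable and ℤ²-periodic. Write P(u) = (⟨u,φ₁⟩, …, ⟨u,φₙ⟩) and define, for ℤ²-periodic continuous u, H(u) = −∑_{j=1}^n ∂_j g(P(u)) · ⟨u, σ·∇φ_j⟩. Then the function ε ↦ H(ω + ε·(σ·∇ω)) is differentiable at ε = 0 and its derivative equals ∑_{j=1}^n ∂_j g(P(ω)) · ⟨ω, σ·∇(σ·∇φ_j)⟩ + ∑_{j,l=1}^n ∂²_{jl} g(P(ω)) · ⟨ω, σ·∇φ_j⟩ · ⟨ω, σ·∇φ_l⟩. -/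

import Mathlib

/-!
Along the path `ω + ε (σ·∇ω)` the pairing is affine in `ε`, so the functional becomes
`ε ↦ -∑ⱼ ∂ⱼg(P + ε Q) (Aⱼ + ε Bⱼ)` with `Q_l = ⟨σ·∇ω, φ_l⟩`, `Aⱼ = ⟨ω, σ·∇φⱼ⟩` and
`Bⱼ = ⟨σ·∇ω, σ·∇φⱼ⟩`, and the product and chain rules give its derivative at `0`. Because `σ` is
divergence free, `σ·∇u v + u σ·∇v = div (u v σ)`, whose integral over the period cell vanishes; so
`σ·∇` is antisymmetric for the pairing, `Q = -A` and `Bⱼ = -⟨ω, σ·∇(σ·∇φⱼ)⟩`.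
-/

open MeasureTheory BigOperators

/-- Pairing of two (`ℤ²`-periodic) functions on the torus:
`⟨u, v⟩ = ∫_{[0,1]²} u(x) v(x) dx`. -/
noncomputable def pairT2 (u v : (ℝ × ℝ) → ℝ) : ℝ :=
  ∫ x in (Set.Icc (0 : ℝ) 1) ×ˢ (Set.Icc (0 : ℝ) 1), u x * v x

theorem Function.Periodic.fderiv {𝕜 E F : Type*} [NontriviallyNormedField 𝕜]
    [NormedAddCommGroup E] [NormedSpace 𝕜 E] [NormedAddCommGroup F] [NormedSpace 𝕜 F]
    {f : E → F} {c : E} (hf : Function.Periodic f c) : Function.Periodic (fderiv 𝕜 f) c :=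
  fun x => by rw [← fderiv_comp_add_right, funext hf]

def IsZ2Periodic {α : Type*} (f : ℝ × ℝ → α) : Prop :=
  ∀ (x : ℝ × ℝ) (m : ℤ × ℤ), f (x + ((m.1 : ℝ), (m.2 : ℝ))) = f x

namespace IsZ2Periodic

variable {α : Type*} {f : ℝ × ℝ → α}

theorem periodic_fst (hf : IsZ2Periodic f) : Function.Periodic f (1, 0) :=
  fun x => by simpa using hf x (1, 0)

theorem periodic_snd (hf : IsZ2Periodic f) : Function.Periodic f (0, 1) :=
  fun x => by simpa using hf x (0, 1)

theorem fderiv_apply {u : ℝ × ℝ → ℝ} {σ : ℝ × ℝ → ℝ × ℝ} (hu : IsZ2Periodic u)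
    (hσ : IsZ2Periodic σ) : IsZ2Periodic fun z => fderiv ℝ u z (σ z) :=
  fun z m => by simp only [Function.Periodic.fderiv (hu · m) z, hσ z m]

end IsZ2Periodic

theorem integral_Icc_fderiv_add_smul_eq_zero {E : Type*} [NormedAddCommGroup E]
    [NormedSpace ℝ E] {F : E → ℝ} (hF : ContDiff ℝ 1 F) {v : E} (hv : Function.Periodic F v)
    (z : E) : ∫ t in Set.Icc (0 : ℝ) 1, fderiv ℝ F (z + t • v) v = 0 := by
  have hderiv : ∀ t : ℝ, HasDerivAt (fun t => F (z + t • v)) (fderiv ℝ F (z + t • v) v) t :=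
    fun t => by
      have h := (hF.differentiable one_ne_zero _).hasFDerivAt.comp_hasDerivAt t
        (((hasDerivAt_id' t).smul_const v).const_add z)
      rwa [one_smul] at h
  have hcont : Continuous fun t : ℝ => fderiv ℝ F (z + t • v) v :=
    ((hF.continuous_fderiv one_ne_zero).comp (by fun_prop)).clm_apply continuous_const
  rw [integral_Icc_eq_integral_Ioc, ← intervalIntegral.integral_of_le zero_le_one,
    intervalIntegral.integral_eq_sub_of_hasDerivAt (fun t _ => hderiv t)
      (hcont.intervalIntegrable 0 1)]
  simp [hv z]

abbrev unitSquare : Set (ℝ × ℝ) := Set.Icc (0 : ℝ) 1 ×ˢ Set.Icc (0 : ℝ) 1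

theorem integrableOn_unitSquare {f : ℝ × ℝ → ℝ} (hf : Continuous f) : IntegrableOn f unitSquare :=
  hf.continuousOn.integrableOn_compact (isCompact_Icc.prod isCompact_Icc)

theorem setIntegral_unitSquare {f : ℝ × ℝ → ℝ} (hf : Continuous f) :
    ∫ z in unitSquare, f z = ∫ x in Set.Icc (0 : ℝ) 1, ∫ y in Set.Icc (0 : ℝ) 1, f (x, y) := by
  rw [Measure.volume_eq_prod, setIntegral_prod f]
  rw [← Measure.volume_eq_prod]
  exact integrableOn_unitSquare hf

theorem setIntegral_unitSquare_swap {f : ℝ × ℝ → ℝ} (hf : Continuous f) :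
    ∫ z in unitSquare, f z = ∫ y in Set.Icc (0 : ℝ) 1, ∫ x in Set.Icc (0 : ℝ) 1, f (x, y) := by
  rw [setIntegral_unitSquare hf]
  refine integral_integral_swap ?_
  rw [Measure.prod_restrict, ← Measure.volume_eq_prod]
  exact integrableOn_unitSquare hf

theorem setIntegral_unitSquare_fderiv_fst_eq_zero {F : ℝ × ℝ → ℝ} (hF : ContDiff ℝ 1 F)
    (hper : Function.Periodic F (1, 0)) : ∫ z in unitSquare, fderiv ℝ F z (1, 0) = 0 := by
  rw [setIntegral_unitSquare_swap ((hF.continuous_fderiv one_ne_zero).clm_apply continuous_const)]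
  have hline (y : ℝ) : ∫ x in Set.Icc (0 : ℝ) 1, fderiv ℝ F (x, y) (1, 0) = 0 := by
    simpa using integral_Icc_fderiv_add_smul_eq_zero hF hper (0, y)
  simp [hline]

theorem setIntegral_unitSquare_fderiv_snd_eq_zero {F : ℝ × ℝ → ℝ} (hF : ContDiff ℝ 1 F)
    (hper : Function.Periodic F (0, 1)) : ∫ z in unitSquare, fderiv ℝ F z (0, 1) = 0 := by
  rw [setIntegral_unitSquare ((hF.continuous_fderiv one_ne_zero).clm_apply continuous_const)]
  have hline (x : ℝ) : ∫ y in Set.Icc (0 : ℝ) 1, fderiv ℝ F (x, y) (0, 1) = 0 := by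
    simpa using integral_Icc_fderiv_add_smul_eq_zero hF hper (x, 0)
  simp [hline]

theorem fderiv_mul_fst_add_fderiv_mul_snd {f : ℝ × ℝ → ℝ} {σ : ℝ × ℝ → ℝ × ℝ} {z : ℝ × ℝ}
    (hf : DifferentiableAt ℝ f z) (hσ : DifferentiableAt ℝ σ z) :
    fderiv ℝ (fun z => f z * (σ z).1) z (1, 0) + fderiv ℝ (fun z => f z * (σ z).2) z (0, 1)
      = fderiv ℝ f z (σ z) + f z * ((fderiv ℝ σ z (1, 0)).1 + (fderiv ℝ σ z (0, 1)).2) := by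
  have hσz : σ z = (σ z).1 • ((1 : ℝ), (0 : ℝ)) + (σ z).2 • ((0 : ℝ), (1 : ℝ)) := by ext <;> simp
  have hsplit : fderiv ℝ f z (σ z)
      = (σ z).1 * fderiv ℝ f z (1, 0) + (σ z).2 * fderiv ℝ f z (0, 1) := by
    conv_lhs => rw [hσz]
    rw [map_add, map_smul, map_smul, smul_eq_mul, smul_eq_mul]
  rw [fderiv_fun_mul hf hσ.fst, fderiv_fun_mul hf hσ.snd, fderiv.fst hσ, fderiv.snd hσ, hsplit]
  simp only [add_apply, smul_apply, ContinuousLinearMap.comp_apply, ContinuousLinearMap.coe_fst',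
    ContinuousLinearMap.coe_snd', smul_eq_mul]
  ring

theorem pairT2_fderiv_apply_left_eq_neg {u v : ℝ × ℝ → ℝ} {σ : ℝ × ℝ → ℝ × ℝ}
    (hu : ContDiff ℝ 1 u) (hv : ContDiff ℝ 1 v) (hσ : ContDiff ℝ 1 σ)
    (hσdiv : ∀ x, (fderiv ℝ σ x (1, 0)).1 + (fderiv ℝ σ x (0, 1)).2 = 0)
    (hu_per : IsZ2Periodic u) (hv_per : IsZ2Periodic v) (hσ_per : IsZ2Periodic σ) :
    pairT2 (fun z => fderiv ℝ u z (σ z)) v = -pairT2 u (fun z => fderiv ℝ v z (σ z)) := by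
  set f : ℝ × ℝ → ℝ := fun z => u z * v z
  have hf : ContDiff ℝ 1 f := hu.mul hv
  have hf_per : IsZ2Periodic f := fun z m => by simp only [f, hu_per z m, hv_per z m]
  have hF₁ : ContDiff ℝ 1 fun z => f z * (σ z).1 := hf.mul hσ.fst
  have hF₂ : ContDiff ℝ 1 fun z => f z * (σ z).2 := hf.mul hσ.snd
  have hF₁_per : Function.Periodic (fun z => f z * (σ z).1) (1, 0) :=
    hf_per.periodic_fst.mul (hσ_per.periodic_fst.comp Prod.fst)
  have hF₂_per : Function.Periodic (fun z => f z * (σ z).2) (0, 1) :=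
    hf_per.periodic_snd.mul (hσ_per.periodic_snd.comp Prod.snd)
  have hdiv_form (z : ℝ × ℝ) : fderiv ℝ u z (σ z) * v z + u z * fderiv ℝ v z (σ z)
      = fderiv ℝ (fun z => f z * (σ z).1) z (1, 0)
        + fderiv ℝ (fun z => f z * (σ z).2) z (0, 1) := by
    rw [fderiv_mul_fst_add_fderiv_mul_snd (hf.differentiable one_ne_zero z)
      (hσ.differentiable one_ne_zero z), hσdiv z,
      fderiv_fun_mul (hu.differentiable one_ne_zero z) (hv.differentiable one_ne_zero z)]
    simp only [add_apply, smul_apply, smul_eq_mul]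
    ring
  have hcont₁ : Continuous fun z => fderiv ℝ (fun z => f z * (σ z).1) z (1, 0) :=
    (hF₁.continuous_fderiv one_ne_zero).clm_apply continuous_const
  have hcont₂ : Continuous fun z => fderiv ℝ (fun z => f z * (σ z).2) z (0, 1) :=
    (hF₂.continuous_fderiv one_ne_zero).clm_apply continuous_const
  have hσu : Continuous fun z => fderiv ℝ u z (σ z) * v z :=
    ((hu.continuous_fderiv one_ne_zero).clm_apply hσ.continuous).mul hv.continuous
  have hσv : Continuous fun z => u z * fderiv ℝ v z (σ z) :=
    hu.continuous.mul ((hv.continuous_fderiv one_ne_zero).clm_apply hσ.continuous)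
  have hsum :
      pairT2 (fun z => fderiv ℝ u z (σ z)) v + pairT2 u (fun z => fderiv ℝ v z (σ z)) = 0 := by
    rw [pairT2, pairT2, ← integral_add (integrableOn_unitSquare hσu) (integrableOn_unitSquare hσv),
      funext hdiv_form,
      integral_add (integrableOn_unitSquare hcont₁) (integrableOn_unitSquare hcont₂),
      setIntegral_unitSquare_fderiv_fst_eq_zero hF₁ hF₁_per,
      setIntegral_unitSquare_fderiv_snd_eq_zero hF₂ hF₂_per, add_zero]
  linarith

theorem pairT2_add_mul_left {a b v : ℝ × ℝ → ℝ} (ha : Continuous a) (hb : Continuous b)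
    (hv : Continuous v) (ε : ℝ) :
    pairT2 (fun x => a x + ε * b x) v = pairT2 a v + ε * pairT2 b v := by
  simp only [pairT2, add_mul, mul_assoc]
  rw [integral_add (f := fun x => a x * v x) (g := fun x => ε * (b x * v x))
    (integrableOn_unitSquare (ha.mul hv))
    ((integrableOn_unitSquare (hb.mul hv)).const_mul ε), integral_const_mul]

theorem ContinuousLinearMap.apply_eq_sum_smul_single {ι R M : Type*} [Fintype ι] [DecidableEq ι]
    [Semiring R] [TopologicalSpace R] [AddCommMonoid M] [TopologicalSpace M] [Module R M]
    (L : (ι → R) →L[R] M) (x : ι → R) : L x = ∑ i, x i • L (Pi.single i 1) := by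
  conv_lhs => rw [pi_eq_sum_univ' x]
  simp only [map_sum, map_smul]

theorem hasDerivAt_sum_fderiv_apply_mul {E ι : Type*} [NormedAddCommGroup E] [NormedSpace ℝ E]
    {g : E → ℝ} (hg : ContDiff ℝ 2 g) (s : Finset ι) (e : ι → E) (p q : E) (a b : ι → ℝ) :
    HasDerivAt (fun ε : ℝ => ∑ j ∈ s, fderiv ℝ g (p + ε • q) (e j) * (a j + ε * b j))
      (∑ j ∈ s, (fderiv ℝ (fun x => fderiv ℝ g x (e j)) p q * a j + fderiv ℝ g p (e j) * b j))
      0 := by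
  refine HasDerivAt.fun_sum fun j _ => ?_
  have hline : HasDerivAt (fun ε : ℝ => p + ε • q) q 0 := by
    simpa using ((hasDerivAt_id' (0 : ℝ)).smul_const q).const_add p
  have hpartial : HasDerivAt (fun ε : ℝ => fderiv ℝ g (p + ε • q) (e j))
      (fderiv ℝ (fun x => fderiv ℝ g x (e j)) p q) 0 :=
    (((hg.fderiv_right le_rfl).clm_apply contDiff_const).differentiable one_ne_zero p).hasFDerivAt
      |>.comp_hasDerivAt_of_eq 0 hline (by simp)
  have haffine : HasDerivAt (fun ε : ℝ => a j + ε * b j) (b j) 0 := by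
    simpa using ((hasDerivAt_id' (0 : ℝ)).mul_const (b j)).const_add (a j)
  simpa using hpartial.fun_mul haffine

theorem hasDerivAt_second_order_cylindrical_general
    (n : ℕ)
    (g : (Fin n → ℝ) → ℝ) (hg : ContDiff ℝ 2 g)
    (φ : Fin n → (ℝ × ℝ) → ℝ) (hφ : ∀ j, ContDiff ℝ 2 (φ j))
    (hφper : ∀ (j : Fin n) (x : ℝ × ℝ) (m : ℤ × ℤ),
      φ j (x + ((m.1 : ℝ), (m.2 : ℝ))) = φ j x)
    (σ : (ℝ × ℝ) → ℝ × ℝ) (hσ : ContDiff ℝ 1 σ)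
    (hσper : ∀ (x : ℝ × ℝ) (m : ℤ × ℤ), σ (x + ((m.1 : ℝ), (m.2 : ℝ))) = σ x)
    (hσdiv : ∀ x : ℝ × ℝ, (fderiv ℝ σ x (1, 0)).1 + (fderiv ℝ σ x (0, 1)).2 = 0)
    (ω : (ℝ × ℝ) → ℝ) (hω : ContDiff ℝ 1 ω)
    (hωper : ∀ (x : ℝ × ℝ) (m : ℤ × ℤ), ω (x + ((m.1 : ℝ), (m.2 : ℝ))) = ω x) :
    HasDerivAt
      (fun ε : ℝ =>
        -∑ j, fderiv ℝ g
            (fun j' => pairT2 (fun x => ω x + ε * fderiv ℝ ω x (σ x)) (φ j'))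
            (Pi.single j 1) *
          pairT2 (fun x => ω x + ε * fderiv ℝ ω x (σ x))
            (fun y => fderiv ℝ (φ j) y (σ y)))
      ((∑ j, fderiv ℝ g (fun j' => pairT2 ω (φ j')) (Pi.single j 1) *
          pairT2 ω (fun x => fderiv ℝ (fun y => fderiv ℝ (φ j) y (σ y)) x (σ x)))
        + ∑ j, ∑ l,
            fderiv ℝ (fun p => fderiv ℝ g p (Pi.single j 1))
              (fun j' => pairT2 ω (φ j')) (Pi.single l 1) *
            pairT2 ω (fun y => fderiv ℝ (φ j) y (σ y)) *
            pairT2 ω (fun y => fderiv ℝ (φ l) y (σ y)))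
      0 := by
  have hσφ (j : Fin n) : ContDiff ℝ 1 fun y => fderiv ℝ (φ j) y (σ y) :=
    ((hφ j).fderiv_right le_rfl).clm_apply hσ
  have hσω : Continuous fun x => fderiv ℝ ω x (σ x) :=
    (hω.continuous_fderiv one_ne_zero).clm_apply hσ.continuous
  set P : Fin n → ℝ := fun j => pairT2 ω (φ j)
  set A : Fin n → ℝ := fun j => pairT2 ω (fun y => fderiv ℝ (φ j) y (σ y))
  have hQ : (fun j => pairT2 (fun x => fderiv ℝ ω x (σ x)) (φ j)) = -A := funext fun j =>
    pairT2_fderiv_apply_left_eq_neg hω ((hφ j).of_le one_le_two) hσ hσdiv hωper (hφper j) hσper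
  have hB (j : Fin n) : pairT2 (fun x => fderiv ℝ ω x (σ x)) (fun y => fderiv ℝ (φ j) y (σ y))
      = -pairT2 ω (fun x => fderiv ℝ (fun y => fderiv ℝ (φ j) y (σ y)) x (σ x)) :=
    pairT2_fderiv_apply_left_eq_neg hω (hσφ j) hσ hσdiv hωper
      (IsZ2Periodic.fderiv_apply (hφper j) hσper) hσper
  refine ((hasDerivAt_sum_fderiv_apply_mul hg Finset.univ (fun j => Pi.single j 1) P (-A) A
    (fun j => pairT2 (fun x => fderiv ℝ ω x (σ x)) (fun y => fderiv ℝ (φ j) y (σ y)))).fun_neg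
    |>.congr_of_eventuallyEq (.of_forall fun ε => ?_)).congr_deriv ?_
  · simp only [pairT2_add_mul_left hω.continuous hσω (hφ _).continuous,
      pairT2_add_mul_left hω.continuous hσω (hσφ _).continuous, ← hQ]
    rfl
  · simp only [hB, map_neg, ContinuousLinearMap.apply_eq_sum_smul_single _ A, smul_eq_mul]
    rw [← Finset.sum_add_distrib, ← Finset.sum_neg_distrib]
    refine Finset.sum_congr rfl fun j _ => ?_
    set L := fderiv ℝ (fun p => fderiv ℝ g p (Pi.single j 1)) P
    have hquad : ∑ l, L (Pi.single l 1) * A j * A l = (∑ l, A l * L (Pi.single l 1)) * A j := by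
      rw [Finset.sum_mul]
      exact Finset.sum_congr rfl fun l _ => by ring
    rw [hquad]
    ring

/-- Second-order identity for cylindrical functionals (Lemma 4.1 of the paper): with
`P(u) = (⟨u,φ₁⟩,…,⟨u,φₙ⟩)` and `H(u) = -∑ⱼ ∂ⱼg(P(u)) ⟨u, σ·∇φⱼ⟩`, the map
`ε ↦ H(ω + ε (σ·∇ω))` is differentiable at `ε = 0` with derivative
`∑ⱼ ∂ⱼg(P(ω)) ⟨ω, σ·∇(σ·∇φⱼ)⟩ + ∑_{j,l} ∂²_{jl}g(P(ω)) ⟨ω, σ·∇φⱼ⟩ ⟨ω, σ·∇φ_l⟩`. -/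
theorem hasDerivAt_second_order_cylindrical
    (n : ℕ) (hn : 1 ≤ n)
    (g : (Fin n → ℝ) → ℝ) (hg : ContDiff ℝ 2 g)
    (φ : Fin n → (ℝ × ℝ) → ℝ) (hφ : ∀ j, ContDiff ℝ 2 (φ j))
    (hφper : ∀ (j : Fin n) (x : ℝ × ℝ) (m : ℤ × ℤ),
      φ j (x + ((m.1 : ℝ), (m.2 : ℝ))) = φ j x)
    (σ : (ℝ × ℝ) → ℝ × ℝ) (hσ : ContDiff ℝ 1 σ)
    (hσper : ∀ (x : ℝ × ℝ) (m : ℤ × ℤ), σ (x + ((m.1 : ℝ), (m.2 : ℝ))) = σ x)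
    (hσdiv : ∀ x : ℝ × ℝ, (fderiv ℝ σ x (1, 0)).1 + (fderiv ℝ σ x (0, 1)).2 = 0)
    (ω : (ℝ × ℝ) → ℝ) (hω : ContDiff ℝ 1 ω)
    (hωper : ∀ (x : ℝ × ℝ) (m : ℤ × ℤ), ω (x + ((m.1 : ℝ), (m.2 : ℝ))) = ω x) :
    HasDerivAt
      (fun ε : ℝ =>
        -∑ j, fderiv ℝ g
            (fun j' => pairT2 (fun x => ω x + ε * fderiv ℝ ω x (σ x)) (φ j'))
            (Pi.single j 1) *
          pairT2 (fun x => ω x + ε * fderiv ℝ ω x (σ x))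
            (fun y => fderiv ℝ (φ j) y (σ y)))
      ((∑ j, fderiv ℝ g (fun j' => pairT2 ω (φ j')) (Pi.single j 1) *
          pairT2 ω (fun x => fderiv ℝ (fun y => fderiv ℝ (φ j) y (σ y)) x (σ x)))
        + ∑ j, ∑ l,
            fderiv ℝ (fun p => fderiv ℝ g p (Pi.single j 1))
              (fun j' => pairT2 ω (φ j')) (Pi.single l 1) *
            pairT2 ω (fun y => fderiv ℝ (φ j) y (σ y)) *
            pairT2 ω (fun y => fderiv ℝ (φ l) y (σ y)))
      0 :=
  hasDerivAt_second_order_cylindrical_general n g hg φ hφ hφper σ hσ hσper hσdiv ω hω hωper
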